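/- arXiv:2107.04732 — 3 statements merged into one kernel-verified Lean document; each statement's English description precedes it below -/
import Mathlib

section
/- Assume κ ≥ 4, ε > 0 and τ > 0, and let u⁰ ∈ ℝ^m satisfy ‖u⁰‖ ≤ 1 and |Σ_{i=1}^m u⁰_i| < m. Define iterates by u^{n+1} = Ψ_τ(uⁿ) for n ≥ 0. Then the discrete maximum bound principle holds unconditionally: ‖uⁿ‖ ≤ 1 for every n ≥ 0. -/
open MeasureTheory

/-- The nonlinearity f(x) = x − x³. -/
noncomputable def fpt (x : ℝ) : ℝ := x - x ^ 3

/-- The function g(x) = 1 − x². -/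
noncomputable def gpt (x : ℝ) : ℝ := 1 - x ^ 2

/-- The Lagrange multiplier λ(v) = (Σᵢ f(vᵢ)) / (Σᵢ g(vᵢ)). -/
noncomputable def lam {m : ℕ} (v : Fin m → ℝ) : ℝ :=
  (∑ i, fpt (v i)) / (∑ i, gpt (v i))

/-- The stabilized nonlinear term N_κ(v)ᵢ = κ vᵢ + f(vᵢ) − λ(v) g(vᵢ). -/
noncomputable def Nk {m : ℕ} (κ : ℝ) (v : Fin m → ℝ) : Fin m → ℝ :=
  fun i => κ * v i + fpt (v i) - lam v * gpt (v i)

/-- The stabilized linear operator L_κ = ε²A − κ·Id. -/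
noncomputable def Lk {m : ℕ} (A : (Fin m → ℝ) →L[ℝ] (Fin m → ℝ)) (ε κ : ℝ) :
    (Fin m → ℝ) →L[ℝ] (Fin m → ℝ) :=
  ε ^ 2 • A - κ • ContinuousLinearMap.id ℝ (Fin m → ℝ)

/-- The ETD1 step Φ_τ(v) = exp(τL_κ)v + ∫₀^τ exp((τ−s)L_κ) N_κ(v) ds. -/
noncomputable def Phi {m : ℕ} (A : (Fin m → ℝ) →L[ℝ] (Fin m → ℝ)) (ε κ τ : ℝ)
    (v : Fin m → ℝ) : Fin m → ℝ :=
  (NormedSpace.exp (τ • Lk A ε κ)) v +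
    ∫ s in (0 : ℝ)..τ, (NormedSpace.exp ((τ - s) • Lk A ε κ)) (Nk κ v)

/-- The ETDRK2 step
Ψ_τ(v) = exp(τL_κ)v + ∫₀^τ exp((τ−s)L_κ)[(1−s/τ)N_κ(v) + (s/τ)N_κ(Φ_τ(v))] ds. -/
noncomputable def Psi {m : ℕ} (A : (Fin m → ℝ) →L[ℝ] (Fin m → ℝ)) (ε κ τ : ℝ)
    (v : Fin m → ℝ) : Fin m → ℝ :=
  (NormedSpace.exp (τ • Lk A ε κ)) v +
    ∫ s in (0 : ℝ)..τ, (NormedSpace.exp ((τ - s) • Lk A ε κ))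
      ((1 - s / τ) • Nk κ v + (s / τ) • Nk κ (Phi A ε κ τ v))

/-! Since `L_κ = ε²A − κ` with `exp(tA)` contractive, `‖exp(tL_κ)‖ ≤ e^{−κt}`; hence an
exponential-integrator step whose forcing stays in the ball of radius `κ` maps the unit ball into
itself, because `e^{−κτ} + (1 − e^{−κτ}) = 1`. For `κ ≥ 4` and `‖v‖ ≤ 1` the forcing `N_κ(v)` does
stay there: `f = x·g`, so `λ(v)` is a `g`-weighted mean of the `vᵢ` and `|λ(v)| ≤ 1`, and
`x ↦ κx + (x − λ)(1 − x²)` maps `[−1, 1]` into `[−κ, κ]`. The ETDRK2 forcing is a convex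
combination of `N_κ(v)` and `N_κ(Φ_τ(v))`, and `Φ_τ` preserves the unit ball by the same
argument. -/

open NormedSpace Set

theorem NormedSpace.exp_sub_algebraMap {𝔸 : Type*} [NormedRing 𝔸] [NormedAlgebra ℝ 𝔸]
    [CompleteSpace 𝔸] (a : 𝔸) (c : ℝ) :
    exp (a - algebraMap ℝ 𝔸 c) = Real.exp (-c) • exp a := by
  let +nondep : NormedAlgebra ℚ 𝔸 := .restrictScalars ℚ ℝ 𝔸
  rw [sub_eq_add_neg, ← map_neg, exp_add_of_commute (Algebra.commutes _ a).symm,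
    ← algebraMap_exp_comm, Real.exp_eq_exp_ℝ, ← Algebra.commutes, Algebra.smul_def]

theorem integral_exp_neg_mul_sub_mul (κ τ : ℝ) :
    ∫ s in (0 : ℝ)..τ, Real.exp (-(κ * (τ - s))) * κ = 1 - Real.exp (-(κ * τ)) := by
  have hderiv (s : ℝ) :
      HasDerivAt (fun x => Real.exp (-(κ * (τ - x)))) (Real.exp (-(κ * (τ - s))) * κ) s := by
    simpa using (((hasDerivAt_id s).const_sub τ).const_mul κ).neg.exp
  rw [intervalIntegral.integral_eq_sub_of_hasDerivAt (fun s _ => hderiv s)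
    (by apply Continuous.intervalIntegrable; fun_prop)]
  simp

section ExpIntegrator

variable {E : Type*} [NormedAddCommGroup E] [NormedSpace ℝ E] [CompleteSpace E]
  {L : E →L[ℝ] E} {κ τ : ℝ}

theorem norm_integral_exp_smul_apply_le
    (hL : ∀ t, 0 ≤ t → ∀ w, ‖exp (t • L) w‖ ≤ Real.exp (-(κ * t)) * ‖w‖) (hτ : 0 ≤ τ)
    {F : ℝ → E} (hF : Continuous F) (hFκ : ∀ s ∈ Icc 0 τ, ‖F s‖ ≤ κ) :
    ‖∫ s in (0 : ℝ)..τ, exp ((τ - s) • L) (F s)‖ ≤ 1 - Real.exp (-(κ * τ)) := by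
  let +nondep : NormedAlgebra ℚ (E →L[ℝ] E) := .restrictScalars ℚ ℝ _
  have hcont : Continuous fun s => exp ((τ - s) • L) (F s) := by fun_prop
  calc ‖∫ s in (0 : ℝ)..τ, exp ((τ - s) • L) (F s)‖
      ≤ ∫ s in (0 : ℝ)..τ, ‖exp ((τ - s) • L) (F s)‖ :=
        intervalIntegral.norm_integral_le_integral_norm hτ
    _ ≤ ∫ s in (0 : ℝ)..τ, Real.exp (-(κ * (τ - s))) * κ := by
        refine intervalIntegral.integral_mono_on hτ (hcont.norm.intervalIntegrable _ _)
          (by apply Continuous.intervalIntegrable; fun_prop) fun s hs => ?_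
        exact (hL _ (sub_nonneg.2 hs.2) _).trans (by gcongr; exact hFκ s hs)
    _ = 1 - Real.exp (-(κ * τ)) := integral_exp_neg_mul_sub_mul κ τ

theorem norm_exp_smul_apply_add_integral_le
    (hL : ∀ t, 0 ≤ t → ∀ w, ‖exp (t • L) w‖ ≤ Real.exp (-(κ * t)) * ‖w‖) (hτ : 0 ≤ τ)
    {F : ℝ → E} (hF : Continuous F) (hFκ : ∀ s ∈ Icc 0 τ, ‖F s‖ ≤ κ) {v : E} (hv : ‖v‖ ≤ 1) :
    ‖exp (τ • L) v + ∫ s in (0 : ℝ)..τ, exp ((τ - s) • L) (F s)‖ ≤ 1 := by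
  have hfree : ‖exp (τ • L) v‖ ≤ Real.exp (-(κ * τ)) :=
    (hL τ hτ v).trans (mul_le_of_le_one_right (Real.exp_pos _).le hv)
  have hforced := norm_integral_exp_smul_apply_le hL hτ hF hFκ
  linarith [norm_add_le (exp (τ • L) v) (∫ s in (0 : ℝ)..τ, exp ((τ - s) • L) (F s))]

end ExpIntegrator

theorem abs_sum_mul_div_sum_le_one {ι : Type*} (s : Finset ι) {a w : ι → ℝ}
    (ha : ∀ i ∈ s, |a i| ≤ 1) (hw : ∀ i ∈ s, 0 ≤ w i) :
    |(∑ i ∈ s, a i * w i) / ∑ i ∈ s, w i| ≤ 1 := by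
  -- `div_le_one_of_le₀` also covers `∑ w = 0`, where the quotient is `0` by convention.
  rw [abs_div, abs_of_nonneg (Finset.sum_nonneg hw)]
  refine div_le_one_of_le₀ ((Finset.abs_sum_le_sum_abs _ _).trans
    (Finset.sum_le_sum fun i hi => ?_)) (Finset.sum_nonneg hw)
  rw [abs_mul, abs_of_nonneg (hw i hi)]
  exact mul_le_of_le_one_left (hw i hi) (ha i hi)

theorem fpt_eq_mul_gpt (x : ℝ) : fpt x = x * gpt x := by
  unfold fpt gpt
  ring

theorem gpt_nonneg {x : ℝ} (hx : |x| ≤ 1) : 0 ≤ gpt x :=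
  sub_nonneg.2 (sq_le_one_iff_abs_le_one x |>.2 hx)

theorem abs_lam_le_one {m : ℕ} {v : Fin m → ℝ} (hv : ‖v‖ ≤ 1) : |lam v| ≤ 1 := by
  have hvi (i : Fin m) : |v i| ≤ 1 := (norm_le_pi_norm v i).trans hv
  simp only [lam, fpt_eq_mul_gpt]
  exact abs_sum_mul_div_sum_le_one _ (fun i _ => hvi i) fun i _ => gpt_nonneg (hvi i)

theorem abs_mul_add_sub_mul_gpt_le {κ x l : ℝ} (hκ : 4 ≤ κ) (hx : |x| ≤ 1) (hl : |l| ≤ 1) :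
    |κ * x + (x - l) * gpt x| ≤ κ := by
  obtain ⟨hx₁, hx₂⟩ := abs_le.1 hx
  obtain ⟨hl₁, hl₂⟩ := abs_le.1 hl
  -- `κ ± (κ x + (x - l)(1 - x²)) = (1 ± x)(κ ± (1 ∓ x)(x - l))` with `|(1 ∓ x)(x - l)| ≤ 4`.
  have hlower : 0 ≤ (1 + x) * (κ + (1 - x) * (x - l)) :=
    mul_nonneg (by linarith) (by nlinarith)
  have hupper : 0 ≤ (1 - x) * (κ - (1 + x) * (x - l)) :=
    mul_nonneg (by linarith) (by nlinarith)
  unfold gpt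
  rw [abs_le]
  constructor <;> nlinarith

theorem norm_Nk_le {m : ℕ} {κ : ℝ} (hκ : 4 ≤ κ) {v : Fin m → ℝ} (hv : ‖v‖ ≤ 1) :
    ‖Nk κ v‖ ≤ κ := by
  have hvi (i : Fin m) : |v i| ≤ 1 := (norm_le_pi_norm v i).trans hv
  refine (pi_norm_le_iff_of_nonneg (by linarith)).2 fun i => ?_
  have hNk : Nk κ v i = κ * v i + (v i - lam v) * gpt (v i) := by
    simp only [Nk, fpt_eq_mul_gpt]
    ring
  rw [Real.norm_eq_abs, hNk]
  exact abs_mul_add_sub_mul_gpt_le hκ (hvi i) (abs_lam_le_one hv)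

section Scheme

variable {m : ℕ} {A : (Fin m → ℝ) →L[ℝ] (Fin m → ℝ)}

theorem norm_exp_smul_Lk_apply_le
    (hC : ∀ t : ℝ, 0 ≤ t → ∀ v : Fin m → ℝ, ‖(NormedSpace.exp (t • A)) v‖ ≤ ‖v‖)
    (ε κ t : ℝ) (ht : 0 ≤ t) (w : Fin m → ℝ) :
    ‖exp (t • Lk A ε κ) w‖ ≤ Real.exp (-(κ * t)) * ‖w‖ := by
  have hLk : t • Lk A ε κ = (t * ε ^ 2) • A - algebraMap ℝ _ (κ * t) := by
    ext v i
    simp only [Lk, smul_apply, sub_apply, ContinuousLinearMap.id_apply, Pi.smul_apply,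
      Pi.sub_apply, smul_eq_mul, Algebra.algebraMap_eq_smul_one, one_apply_eq_self]
    ring
  rw [hLk, exp_sub_algebraMap, smul_apply, norm_smul,
    Real.norm_of_nonneg (Real.exp_pos _).le]
  gcongr
  exact hC _ (by positivity) w

theorem norm_Phi_le
    (hC : ∀ t : ℝ, 0 ≤ t → ∀ v : Fin m → ℝ, ‖(NormedSpace.exp (t • A)) v‖ ≤ ‖v‖)
    {ε κ τ : ℝ} (hκ : 4 ≤ κ) (hτ : 0 ≤ τ) {v : Fin m → ℝ} (hv : ‖v‖ ≤ 1) :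
    ‖Phi A ε κ τ v‖ ≤ 1 :=
  norm_exp_smul_apply_add_integral_le (norm_exp_smul_Lk_apply_le hC ε κ) hτ continuous_const
    (fun _ _ => norm_Nk_le hκ hv) hv

theorem norm_Psi_le
    (hC : ∀ t : ℝ, 0 ≤ t → ∀ v : Fin m → ℝ, ‖(NormedSpace.exp (t • A)) v‖ ≤ ‖v‖)
    {ε κ τ : ℝ} (hκ : 4 ≤ κ) (hτ : 0 ≤ τ) {v : Fin m → ℝ} (hv : ‖v‖ ≤ 1) :
    ‖Psi A ε κ τ v‖ ≤ 1 := by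
  refine norm_exp_smul_apply_add_integral_le (norm_exp_smul_Lk_apply_le hC ε κ) hτ
    (by fun_prop) (fun s hs => ?_) hv
  have hs₀ : 0 ≤ s / τ := div_nonneg hs.1 hτ
  have hs₁ : s / τ ≤ 1 := div_le_one_of_le₀ hs.2 hτ
  simpa using convex_closedBall (0 : Fin m → ℝ) κ
    (mem_closedBall_zero_iff.2 (norm_Nk_le hκ hv))
    (mem_closedBall_zero_iff.2 (norm_Nk_le hκ (norm_Phi_le hC hκ hτ hv)))
    (sub_nonneg.2 hs₁) hs₀ (sub_add_cancel 1 (s / τ))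

end Scheme

theorem stmt_10_general (m : ℕ) (A : (Fin m → ℝ) →L[ℝ] (Fin m → ℝ))
    (hC : ∀ t : ℝ, 0 ≤ t → ∀ v : Fin m → ℝ, ‖(NormedSpace.exp (t • A)) v‖ ≤ ‖v‖)
    (κ ε τ : ℝ) (hκ : κ ≥ 4) (hτ : τ > 0)
    (u : ℕ → Fin m → ℝ) (hnorm0 : ‖u 0‖ ≤ 1)
    (hstep : ∀ n : ℕ, u (n + 1) = Psi A ε κ τ (u n)) :
    ∀ n : ℕ, ‖u n‖ ≤ 1 := by
  intro n
  induction n with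
  | zero => exact hnorm0
  | succ n ih => exact hstep n ▸ norm_Psi_le hC hκ hτ.le ih

/-- Unconditional discrete maximum bound principle of the ETDRK2 scheme: ‖uⁿ‖_∞ ≤ 1
for every n. -/
theorem stmt_10 (m : ℕ) (hm : 1 ≤ m) (A : (Fin m → ℝ) →L[ℝ] (Fin m → ℝ))
    (hC : ∀ t : ℝ, 0 ≤ t → ∀ v : Fin m → ℝ, ‖(NormedSpace.exp (t • A)) v‖ ≤ ‖v‖)
    (hS : ∀ v : Fin m → ℝ, ∑ i, A v i = 0)
    (κ ε τ : ℝ) (hκ : κ ≥ 4) (hε : ε > 0) (hτ : τ > 0)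
    (u : ℕ → Fin m → ℝ) (hnorm0 : ‖u 0‖ ≤ 1) (hmass0 : |∑ i, u 0 i| < (m : ℝ))
    (hstep : ∀ n : ℕ, u (n + 1) = Psi A ε κ τ (u n)) :
    ∀ n : ℕ, ‖u n‖ ≤ 1 :=
  stmt_10_general m A hC κ ε τ hκ hτ u hnorm0 hstep
end

section
/- Assume κ > 0, ε > 0 and τ > 0. Let v ∈ ℝ^m with ‖v‖ ≤ 1 and let w : [0, τ] → ℝ^m be continuous with ‖w(s)‖ ≤ κ for all s ∈ [0, τ]. Then ‖exp(τL_κ)v + ∫₀^τ exp((τ−s)L_κ) w(s) ds‖ ≤ 1. -/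
open MeasureTheory

/-! Since `A` commutes with the identity, `exp (t • L_κ) = e^{-κt} • exp ((t ε²) • A)`, so by (C) the
semigroup generated by `L_κ` contracts at rate `e^{-κt}`. Hence the free part has norm at most
`e^{-κτ}` and the Duhamel integral has norm at most `∫₀^τ κ e^{-κ(τ-s)} ds = 1 - e^{-κτ}`. -/

open NormedSpace Set

section OperatorExponential

variable {E : Type*} [NormedAddCommGroup E] [NormedSpace ℝ E] [CompleteSpace E]

theorem NormedSpace.exp_sub_smul_id (B : E →L[ℝ] E) (c : ℝ) :
    exp (B - c • ContinuousLinearMap.id ℝ E) = Real.exp (-c) • exp B := by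
  have hc : B - c • ContinuousLinearMap.id ℝ E = B + algebraMap ℝ (E →L[ℝ] E) (-c) := by
    rw [Algebra.algebraMap_eq_smul_one, neg_smul, ← sub_eq_add_neg]
    rfl
  -- `exp_add_of_commute` is stated over `ℚ`; restricting scalars provides the instance.
  let +nondep : NormedAlgebra ℚ (E →L[ℝ] E) := .restrictScalars ℚ ℝ _
  rw [hc, exp_add_of_commute (Algebra.commutes _ _).symm, ← algebraMap_exp_comm,
    ← Real.exp_eq_exp_ℝ, ← Algebra.commutes, Algebra.smul_def]

theorem norm_exp_smul_sub_smul_id_apply_le (A : E →L[ℝ] E)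
    (hA : ∀ t : ℝ, 0 ≤ t → ∀ v : E, ‖exp (t • A) v‖ ≤ ‖v‖) {a : ℝ} (ha : 0 ≤ a) (κ : ℝ)
    {t : ℝ} (ht : 0 ≤ t) (u : E) :
    ‖exp (t • (a • A - κ • ContinuousLinearMap.id ℝ E)) u‖ ≤ Real.exp (-(κ * t)) * ‖u‖ := by
  rw [smul_sub, smul_smul, smul_smul, mul_comm t κ, exp_sub_smul_id,
    smul_apply, norm_smul, Real.norm_of_nonneg (Real.exp_pos _).le]
  exact mul_le_mul_of_nonneg_left (hA _ (mul_nonneg ht ha) u) (Real.exp_pos _).le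

end OperatorExponential

theorem integral_mul_exp_neg_mul_sub (κ τ : ℝ) :
    ∫ s in (0 : ℝ)..τ, κ * Real.exp (-(κ * (τ - s))) = 1 - Real.exp (-(κ * τ)) := by
  have hderiv : ∀ s ∈ uIcc (0 : ℝ) τ,
      HasDerivAt (fun x => Real.exp (-(κ * (τ - x)))) (κ * Real.exp (-(κ * (τ - s)))) s := by
    intro s _
    have := ((((hasDerivAt_id s).const_sub τ).const_mul κ).neg).exp
    simpa [mul_comm] using this
  rw [intervalIntegral.integral_eq_sub_of_hasDerivAt hderiv
    (Continuous.intervalIntegrable (by fun_prop) _ _)]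
  simp

theorem norm_add_integral_le_one_of_norm_le_exp_neg {E : Type*} [NormedAddCommGroup E]
    [NormedSpace ℝ E] {S : ℝ → E → E} {κ τ : ℝ} (hτ : 0 ≤ τ)
    (hS : ∀ t, 0 ≤ t → ∀ u, ‖S t u‖ ≤ Real.exp (-(κ * t)) * ‖u‖)
    {v : E} (hv : ‖v‖ ≤ 1) {w : ℝ → E} (hw : ∀ s ∈ Icc 0 τ, ‖w s‖ ≤ κ) :
    ‖S τ v + ∫ s in (0 : ℝ)..τ, S (τ - s) (w s)‖ ≤ 1 := by
  have hfree : ‖S τ v‖ ≤ Real.exp (-(κ * τ)) :=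
    (hS τ hτ v).trans (mul_le_of_le_one_right (Real.exp_pos _).le hv)
  have hforced : ‖∫ s in (0 : ℝ)..τ, S (τ - s) (w s)‖ ≤ 1 - Real.exp (-(κ * τ)) := by
    rw [← integral_mul_exp_neg_mul_sub]
    refine intervalIntegral.norm_integral_le_of_norm_le hτ ?_
      (Continuous.intervalIntegrable (by fun_prop) _ _)
    refine MeasureTheory.ae_of_all _ fun s hs => ?_
    calc ‖S (τ - s) (w s)‖ ≤ Real.exp (-(κ * (τ - s))) * ‖w s‖ := hS _ (by linarith [hs.2]) _
      _ ≤ Real.exp (-(κ * (τ - s))) * κ :=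
        mul_le_mul_of_nonneg_left (hw s ⟨hs.1.le, hs.2⟩) (Real.exp_pos _).le
      _ = κ * Real.exp (-(κ * (τ - s))) := mul_comm _ _
  linarith [norm_add_le (S τ v) (∫ s in (0 : ℝ)..τ, S (τ - s) (w s))]

theorem stmt_11_general (m : ℕ) (A : (Fin m → ℝ) →L[ℝ] (Fin m → ℝ))
    (hC : ∀ t : ℝ, 0 ≤ t → ∀ v : Fin m → ℝ, ‖(NormedSpace.exp (t • A)) v‖ ≤ ‖v‖)
    (κ ε τ : ℝ) (hτ : τ > 0)
    (v : Fin m → ℝ) (hv : ‖v‖ ≤ 1)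
    (w : ℝ → Fin m → ℝ)
    (hw : ∀ s ∈ Set.Icc (0 : ℝ) τ, ‖w s‖ ≤ κ) :
    ‖(NormedSpace.exp (τ • Lk A ε κ)) v +
        ∫ s in (0 : ℝ)..τ, (NormedSpace.exp ((τ - s) • Lk A ε κ)) (w s)‖ ≤ 1 :=
  norm_add_integral_le_one_of_norm_le_exp_neg hτ.le
    (fun _ ht u => norm_exp_smul_sub_smul_id_apply_le A hC (sq_nonneg ε) κ ht u) hv hw

/-- The key MBP estimate: if ‖v‖_∞ ≤ 1 and ‖w(s)‖_∞ ≤ κ on [0,τ], then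
‖exp(τL_κ)v + ∫₀^τ exp((τ−s)L_κ) w(s) ds‖_∞ ≤ 1. -/
theorem stmt_11 (m : ℕ) (hm : 1 ≤ m) (A : (Fin m → ℝ) →L[ℝ] (Fin m → ℝ))
    (hC : ∀ t : ℝ, 0 ≤ t → ∀ v : Fin m → ℝ, ‖(NormedSpace.exp (t • A)) v‖ ≤ ‖v‖)
    (κ ε τ : ℝ) (hκ : κ > 0) (hε : ε > 0) (hτ : τ > 0)
    (v : Fin m → ℝ) (hv : ‖v‖ ≤ 1)
    (w : ℝ → Fin m → ℝ) (hwcont : ContinuousOn w (Set.Icc 0 τ))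
    (hw : ∀ s ∈ Set.Icc (0 : ℝ) τ, ‖w s‖ ≤ κ) :
    ‖(NormedSpace.exp (τ • Lk A ε κ)) v +
        ∫ s in (0 : ℝ)..τ, (NormedSpace.exp ((τ - s) • Lk A ε κ)) (w s)‖ ≤ 1 :=
  stmt_11_general m A hC κ ε τ hτ v hv w hw
end

section
/- Let κ ≥ 4, let γ > 0, and let ξ₁, ξ₂ be continuous real-valued functions on the closure of Ω with |ξ_i(x)| ≤ 1 for all x in the closure of Ω and ∫_Ω g(ξ_i(x)) dx ≥ γ for i = 1, 2. Then for every x in the closure of Ω, |N_κ[ξ₁](x) − N_κ[ξ₂](x)| ≤ C*_γ · κ · sup_{y∈closure(Ω)} |ξ₁(y) − ξ₂(y)|, where C*_γ = 3/2 + C_γ/4 and C_γ = 4|Ω|/γ + 2|Ω|²/γ². -/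
/-!
On `[-1, 1]` the maps `f t = t - t³` and `g t = 1 - t²` are bounded by `1` and `2`-Lipschitz.
Put `S = sup |ξ₁ - ξ₂|` and `p = |Ω| / γ`. Integrating the Lipschitz bounds, the numerators and
the denominators of `λ_{ξ₁}` and `λ_{ξ₂}` differ by at most `2 S |Ω|`, while the denominators are
at least `γ`; hence `|λ_{ξ₂}| ≤ p` and `|λ_{ξ₁} - λ_{ξ₂}| ≤ 2 p S + 2 p² S`. Pointwise,
`N_κ[ξ₁] - N_κ[ξ₂] = κ (ξ₁ - ξ₂) + (f ξ₁ - f ξ₂) - (λ_{ξ₁} - λ_{ξ₂}) g ξ₁ - λ_{ξ₂} (g ξ₁ - g ξ₂)`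
is therefore at most `(κ + 2 + 4 p + 2 p²) S`, and `κ ≥ 4` absorbs `2 + 4 p + 2 p²` into
`κ (1/2 + p + p²/2)`.
-/

open MeasureTheory

section CubicNonlinearity

variable {a b t : ℝ}

lemma abs_sub_cube_le_one (ht : |t| ≤ 1) : |t - t ^ 3| ≤ 1 := by
  rw [abs_le] at *
  constructor <;> nlinarith [sq_nonneg t, sq_nonneg (t - 1), sq_nonneg (t + 1)]

lemma abs_one_sub_sq_le_one (ht : |t| ≤ 1) : |1 - t ^ 2| ≤ 1 := by
  rw [abs_le] at *
  constructor <;> nlinarith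

lemma abs_sub_cube_sub_sub_cube_le (ha : |a| ≤ 1) (hb : |b| ≤ 1) :
    |(a - a ^ 3) - (b - b ^ 3)| ≤ 2 * |a - b| := by
  have hfactor : (a - a ^ 3) - (b - b ^ 3) = (1 - (a ^ 2 + a * b + b ^ 2)) * (a - b) := by ring
  rw [hfactor, abs_mul]
  gcongr
  rw [abs_le] at *
  constructor <;> nlinarith [sq_nonneg (a + b), sq_nonneg (a - b)]

lemma abs_one_sub_sq_sub_one_sub_sq_le (ha : |a| ≤ 1) (hb : |b| ≤ 1) :
    |(1 - a ^ 2) - (1 - b ^ 2)| ≤ 2 * |a - b| := by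
  have hfactor : (1 - a ^ 2) - (1 - b ^ 2) = -(a + b) * (a - b) := by ring
  rw [hfactor, abs_mul, abs_neg]
  gcongr
  linarith [abs_add_le a b]

end CubicNonlinearity

lemma abs_div_sub_div_le {F₁ F₂ G₁ G₂ γ : ℝ} (hγ : 0 < γ) (hG₁ : γ ≤ G₁) (hG₂ : γ ≤ G₂) :
    |F₁ / G₁ - F₂ / G₂| ≤ |F₁ - F₂| / γ + |F₂| * |G₁ - G₂| / γ ^ 2 := by
  have hG₁pos : 0 < G₁ := hγ.trans_le hG₁
  have hG₂pos : 0 < G₂ := hγ.trans_le hG₂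
  have hsplit : F₁ / G₁ - F₂ / G₂ = (F₁ - F₂) / G₁ + F₂ * (G₂ - G₁) / (G₁ * G₂) := by
    field_simp
    ring
  rw [hsplit]
  calc _ ≤ |(F₁ - F₂) / G₁| + |F₂ * (G₂ - G₁) / (G₁ * G₂)| := abs_add_le _ _
    _ = |F₁ - F₂| / G₁ + |F₂| * |G₁ - G₂| / (G₁ * G₂) := by
        rw [abs_div, abs_div, abs_mul, abs_sub_comm G₂, abs_of_pos hG₁pos,
          abs_of_pos (mul_pos hG₁pos hG₂pos)]
    _ ≤ |F₁ - F₂| / γ + |F₂| * |G₁ - G₂| / γ ^ 2 := by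
        rw [sq]
        gcongr

lemma abs_sub_le_biSup_of_abs_le_one {β : Type*} {s : Set β} {u v : β → ℝ}
    (hu : ∀ y ∈ s, |u y| ≤ 1) (hv : ∀ y ∈ s, |v y| ≤ 1) {x : β} (hx : x ∈ s) :
    |u x - v x| ≤ ⨆ y ∈ s, |u y - v y| := by
  refine le_ciSup₂ (f := fun y (_ : y ∈ s) => |u y - v y|) ⟨2, ?_⟩ x hx
  simp only [mem_upperBounds, Set.mem_iUnion, Set.mem_range]
  rintro _ ⟨y, hy, rfl⟩
  linarith [abs_sub (u y) (v y), hu y hy, hv y hy]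

lemma MeasureTheory.IntegrableOn.of_continuousOn_closure {X E : Type*} [MetricSpace X]
    [ProperSpace X] [MeasurableSpace X] [OpensMeasurableSpace X] [NormedAddCommGroup E]
    {μ : Measure X} [IsFiniteMeasureOnCompacts μ] {s : Set X} {h : X → E} (hs : Bornology.IsBounded s) (hh : ContinuousOn h (closure s)) :
    IntegrableOn h s μ :=
  (hh.integrableOn_compact hs.isCompact_closure).mono_set subset_closure

section LagrangeMultiplier

variable {α : Type*} [MeasurableSpace α] {μ : Measure α} {s : Set α}

lemma abs_setIntegral_sub_setIntegral_le {u v : α → ℝ} {C : ℝ} (hs : μ s < ⊤)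
    (hu : IntegrableOn u s μ) (hv : IntegrableOn v s μ) (huv : ∀ y ∈ s, |u y - v y| ≤ C) :
    |∫ y in s, u y ∂μ - ∫ y in s, v y ∂μ| ≤ C * μ.real s := by
  rw [← integral_sub hu hv, ← Real.norm_eq_abs]
  exact norm_setIntegral_le_of_norm_le_const hs fun y hy =>
    (Real.norm_eq_abs _).trans_le (huv y hy)

/-- The multiplier `λ_ξ`. -/
noncomputable def lagrangeMultiplier (μ : Measure α) (s : Set α) (ξ : α → ℝ) : ℝ :=
  (∫ y in s, (ξ y - ξ y ^ 3) ∂μ) / ∫ y in s, (1 - ξ y ^ 2) ∂μ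

variable {γ S : ℝ} {ξ ξ₁ ξ₂ : α → ℝ}

lemma abs_setIntegral_sub_cube_le (hs : μ s < ⊤) (hξ : ∀ y ∈ s, |ξ y| ≤ 1) :
    |∫ y in s, (ξ y - ξ y ^ 3) ∂μ| ≤ μ.real s := by
  simpa using norm_setIntegral_le_of_norm_le_const hs fun y hy =>
    (Real.norm_eq_abs _).trans_le (abs_sub_cube_le_one (hξ y hy))

lemma abs_lagrangeMultiplier_le (hs : μ s < ⊤) (hγ : 0 < γ) (hξ : ∀ y ∈ s, |ξ y| ≤ 1)
    (hg : γ ≤ ∫ y in s, (1 - ξ y ^ 2) ∂μ) :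
    |lagrangeMultiplier μ s ξ| ≤ μ.real s / γ := by
  rw [lagrangeMultiplier, abs_div, abs_of_pos (hγ.trans_le hg)]
  exact div_le_div₀ measureReal_nonneg (abs_setIntegral_sub_cube_le hs hξ) hγ hg

lemma abs_lagrangeMultiplier_sub_le (hs : μ s < ⊤) (hγ : 0 < γ)
    (hξ₁ : ∀ y ∈ s, |ξ₁ y| ≤ 1) (hξ₂ : ∀ y ∈ s, |ξ₂ y| ≤ 1)
    (hf₁ : IntegrableOn (fun y => ξ₁ y - ξ₁ y ^ 3) s μ)
    (hf₂ : IntegrableOn (fun y => ξ₂ y - ξ₂ y ^ 3) s μ)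
    (hg₁ : IntegrableOn (fun y => 1 - ξ₁ y ^ 2) s μ)
    (hg₂ : IntegrableOn (fun y => 1 - ξ₂ y ^ 2) s μ)
    (hγ₁ : γ ≤ ∫ y in s, (1 - ξ₁ y ^ 2) ∂μ) (hγ₂ : γ ≤ ∫ y in s, (1 - ξ₂ y ^ 2) ∂μ)
    (hS : ∀ y ∈ s, |ξ₁ y - ξ₂ y| ≤ S) :
    |lagrangeMultiplier μ s ξ₁ - lagrangeMultiplier μ s ξ₂| ≤
      2 * (μ.real s / γ) * S + 2 * (μ.real s / γ) ^ 2 * S := by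
  have hf := abs_setIntegral_sub_setIntegral_le (C := 2 * S) hs hf₁ hf₂ fun y hy =>
    (abs_sub_cube_sub_sub_cube_le (hξ₁ y hy) (hξ₂ y hy)).trans (by linarith [hS y hy])
  have hg := abs_setIntegral_sub_setIntegral_le (C := 2 * S) hs hg₁ hg₂ fun y hy =>
    (abs_one_sub_sq_sub_one_sub_sq_le (hξ₁ y hy) (hξ₂ y hy)).trans (by linarith [hS y hy])
  calc |lagrangeMultiplier μ s ξ₁ - lagrangeMultiplier μ s ξ₂|
      ≤ _ := abs_div_sub_div_le hγ hγ₁ hγ₂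
    _ ≤ 2 * S * μ.real s / γ + μ.real s * (2 * S * μ.real s) / γ ^ 2 := by
        gcongr
        exact abs_setIntegral_sub_cube_le hs hξ₂
    _ = 2 * (μ.real s / γ) * S + 2 * (μ.real s / γ) ^ 2 * S := by ring

end LagrangeMultiplier

lemma abs_stabilized_sub_le {a b κ l₁ l₂ S : ℝ} (hκ : 0 ≤ κ) (ha : |a| ≤ 1) (hb : |b| ≤ 1)
    (hab : |a - b| ≤ S) :
    |(κ * a + (a - a ^ 3) - l₁ * (1 - a ^ 2)) - (κ * b + (b - b ^ 3) - l₂ * (1 - b ^ 2))| ≤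
      (κ + 2) * S + |l₁ - l₂| + 2 * |l₂| * S := by
  have hsplit : (κ * a + (a - a ^ 3) - l₁ * (1 - a ^ 2)) - (κ * b + (b - b ^ 3) - l₂ * (1 - b ^ 2))
      = (κ * (a - b) + ((a - a ^ 3) - (b - b ^ 3))) -
        ((l₁ - l₂) * (1 - a ^ 2) + l₂ * ((1 - a ^ 2) - (1 - b ^ 2))) := by ring
  have hlin : |κ * (a - b)| ≤ κ * S := by
    rw [abs_mul, abs_of_nonneg hκ]
    gcongr
  have hf : |(a - a ^ 3) - (b - b ^ 3)| ≤ 2 * S :=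
    (abs_sub_cube_sub_sub_cube_le ha hb).trans (by linarith)
  have hlam : |(l₁ - l₂) * (1 - a ^ 2)| ≤ |l₁ - l₂| := by
    rw [abs_mul]
    exact mul_le_of_le_one_right (abs_nonneg _) (abs_one_sub_sq_le_one ha)
  have hg : |l₂ * ((1 - a ^ 2) - (1 - b ^ 2))| ≤ |l₂| * (2 * S) := by
    rw [abs_mul]
    gcongr
    exact (abs_one_sub_sq_sub_one_sub_sq_le ha hb).trans (by linarith)
  rw [hsplit]
  calc _ ≤ (|κ * (a - b)| + |(a - a ^ 3) - (b - b ^ 3)|) +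
          (|(l₁ - l₂) * (1 - a ^ 2)| + |l₂ * ((1 - a ^ 2) - (1 - b ^ 2))|) :=
        (abs_sub _ _).trans (add_le_add (abs_add_le _ _) (abs_add_le _ _))
    _ ≤ (κ * S + 2 * S) + (|l₁ - l₂| + |l₂| * (2 * S)) := by gcongr
    _ = (κ + 2) * S + |l₁ - l₂| + 2 * |l₂| * S := by ring

theorem stmt_13_general (d : ℕ) (Ω : Set (Fin d → ℝ))
    (hbdd : Bornology.IsBounded Ω)
    (κ : ℝ) (hκ : κ ≥ 4) (γ : ℝ) (hγ : γ > 0)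
    (ξ₁ ξ₂ : (Fin d → ℝ) → ℝ)
    (hcont₁ : ContinuousOn ξ₁ (closure Ω)) (hcont₂ : ContinuousOn ξ₂ (closure Ω))
    (hbound₁ : ∀ x ∈ closure Ω, |ξ₁ x| ≤ 1) (hbound₂ : ∀ x ∈ closure Ω, |ξ₂ x| ≤ 1)
    (hγ₁ : γ ≤ ∫ x in Ω, (1 - ξ₁ x ^ 2)) (hγ₂ : γ ≤ ∫ x in Ω, (1 - ξ₂ x ^ 2)) :
    ∀ x ∈ closure Ω,
      |(κ * ξ₁ x + (ξ₁ x - ξ₁ x ^ 3) -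
          ((∫ y in Ω, (ξ₁ y - ξ₁ y ^ 3)) / ∫ y in Ω, (1 - ξ₁ y ^ 2)) * (1 - ξ₁ x ^ 2)) -
        (κ * ξ₂ x + (ξ₂ x - ξ₂ x ^ 3) -
          ((∫ y in Ω, (ξ₂ y - ξ₂ y ^ 3)) / ∫ y in Ω, (1 - ξ₂ y ^ 2)) * (1 - ξ₂ x ^ 2))| ≤
        (3 / 2 + (4 * (volume Ω).toReal / γ + 2 * (volume Ω).toReal ^ 2 / γ ^ 2) / 4) *
          κ * ⨆ y ∈ closure Ω, |ξ₁ y - ξ₂ y| := by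
  intro x hx
  set S := ⨆ y ∈ closure Ω, |ξ₁ y - ξ₂ y|
  set p := volume.real Ω / γ with hp
  have hS : ∀ y ∈ closure Ω, |ξ₁ y - ξ₂ y| ≤ S := fun y hy =>
    abs_sub_le_biSup_of_abs_le_one hbound₁ hbound₂ hy
  have hS₀ : 0 ≤ S := (abs_nonneg _).trans (hS x hx)
  have hΩ₁ : ∀ y ∈ Ω, |ξ₁ y| ≤ 1 := fun y hy => hbound₁ y (subset_closure hy)
  have hΩ₂ : ∀ y ∈ Ω, |ξ₂ y| ≤ 1 := fun y hy => hbound₂ y (subset_closure hy)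
  have hlam₂ : |lagrangeMultiplier volume Ω ξ₂| ≤ p :=
    abs_lagrangeMultiplier_le hbdd.measure_lt_top hγ hΩ₂ hγ₂
  have hlam : |lagrangeMultiplier volume Ω ξ₁ - lagrangeMultiplier volume Ω ξ₂| ≤
      2 * p * S + 2 * p ^ 2 * S :=
    abs_lagrangeMultiplier_sub_le hbdd.measure_lt_top hγ hΩ₁ hΩ₂
      (.of_continuousOn_closure hbdd (by fun_prop)) (.of_continuousOn_closure hbdd (by fun_prop))
      (.of_continuousOn_closure hbdd (by fun_prop)) (.of_continuousOn_closure hbdd (by fun_prop))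
      hγ₁ hγ₂ fun y hy => hS y (subset_closure hy)
  have hκS : 0 ≤ S * (κ - 4) * (1 / 2 + p + p ^ 2 / 2) := by
    have : 0 ≤ p := by positivity
    have : 0 ≤ κ - 4 := by linarith
    positivity
  calc _ ≤ (κ + 2) * S + |lagrangeMultiplier volume Ω ξ₁ - lagrangeMultiplier volume Ω ξ₂| +
          2 * |lagrangeMultiplier volume Ω ξ₂| * S :=
        abs_stabilized_sub_le (by linarith) (hbound₁ x hx) (hbound₂ x hx) (hS x hx)
    _ ≤ (κ + 2) * S + (2 * p * S + 2 * p ^ 2 * S) + 2 * p * S := by gcongr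
    _ ≤ (3 / 2 + (4 * p + 2 * p ^ 2) / 4) * κ * S := by linarith
    _ = _ := by rw [hp, measureReal_def]; ring

/-- Lipschitz-type bound for the stabilized nonlinear term N_κ[ξ] = κξ + f(ξ) − λ_ξ g(ξ):
if κ ≥ 4, |ξᵢ| ≤ 1 on the closure of Ω and ∫_Ω g(ξᵢ) ≥ γ > 0 for i = 1,2, then for every
x in the closure of Ω, |N_κ[ξ₁](x) − N_κ[ξ₂](x)| ≤ C*_γ κ sup_{closure Ω} |ξ₁ − ξ₂| with
C*_γ = 3/2 + C_γ/4 and C_γ = 4|Ω|/γ + 2|Ω|²/γ², where f(x) = x − x³, g(x) = 1 − x² and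
λ_ξ = (∫_Ω f(ξ)) / (∫_Ω g(ξ)). -/
theorem stmt_13 (d : ℕ) (hd : 1 ≤ d) (Ω : Set (Fin d → ℝ))
    (hne : Ω.Nonempty) (hopen : IsOpen Ω) (hconn : IsConnected Ω)
    (hbdd : Bornology.IsBounded Ω) (hvol : volume Ω < ⊤)
    (κ : ℝ) (hκ : κ ≥ 4) (γ : ℝ) (hγ : γ > 0)
    (ξ₁ ξ₂ : (Fin d → ℝ) → ℝ)
    (hcont₁ : ContinuousOn ξ₁ (closure Ω)) (hcont₂ : ContinuousOn ξ₂ (closure Ω))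
    (hbound₁ : ∀ x ∈ closure Ω, |ξ₁ x| ≤ 1) (hbound₂ : ∀ x ∈ closure Ω, |ξ₂ x| ≤ 1)
    (hγ₁ : γ ≤ ∫ x in Ω, (1 - ξ₁ x ^ 2)) (hγ₂ : γ ≤ ∫ x in Ω, (1 - ξ₂ x ^ 2)) :
    ∀ x ∈ closure Ω,
      |(κ * ξ₁ x + (ξ₁ x - ξ₁ x ^ 3) -
          ((∫ y in Ω, (ξ₁ y - ξ₁ y ^ 3)) / ∫ y in Ω, (1 - ξ₁ y ^ 2)) * (1 - ξ₁ x ^ 2)) -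
        (κ * ξ₂ x + (ξ₂ x - ξ₂ x ^ 3) -
          ((∫ y in Ω, (ξ₂ y - ξ₂ y ^ 3)) / ∫ y in Ω, (1 - ξ₂ y ^ 2)) * (1 - ξ₂ x ^ 2))| ≤
        (3 / 2 + (4 * (volume Ω).toReal / γ + 2 * (volume Ω).toReal ^ 2 / γ ^ 2) / 4) *
          κ * ⨆ y ∈ closure Ω, |ξ₁ y - ξ₂ y| :=
  stmt_13_general d Ω hbdd κ hκ γ hγ ξ₁ ξ₂ hcont₁ hcont₂ hbound₁ hbound₂ hγ₁ hγ₂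
end
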